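/- Let S ⊆ ℕ^d be a Frobenius generalized numerical semigroup with Frobenius gap F = F(S). Then t(S) ≤ 2·g(S) + 1 − ‖F‖. -/

import Mathlib

/-!
Every gap of a Frobenius GNS lies below `F`, so the box `[0, F]` splits into the `g(S)` gaps
and `‖F‖ - g(S)` elements of `S`. The reflection `x ↦ F - x` maps the elements of `S` in the box
injectively into the gaps (since `(F - x) + x = F ∉ S`), and its image meets the
pseudo-Frobenius gaps only in `F` (otherwise `F = (F - x) + x ∈ S` for a nonzero `x ∈ S`).
Both sets sit inside the gap set, whence `t(S) + ‖F‖ - g(S) ≤ g(S) + 1`.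
-/

open Finset

/-- A generalized numerical semigroup (GNS) in `ℕ^d`: contains `0`, is closed under
componentwise addition, and has finite complement. -/
def IsGNS {d : ℕ} (S : Set (Fin d → ℕ)) : Prop :=
  (0 : Fin d → ℕ) ∈ S ∧ (∀ a ∈ S, ∀ b ∈ S, a + b ∈ S) ∧ Sᶜ.Finite

/-- A relaxed monomial order on `ℕ^d`: a (strict) total order `r` such that
`r v w → r v (w + u)` and `0` is below every nonzero element. -/
def IsRMO {d : ℕ} (r : (Fin d → ℕ) → (Fin d → ℕ) → Prop) : Prop :=
  IsStrictTotalOrder (Fin d → ℕ) r ∧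
  (∀ v w u : Fin d → ℕ, r v w → r v (w + u)) ∧
  (∀ v : Fin d → ℕ, v ≠ 0 → r 0 v)

/-- `F` is the Frobenius gap of `S` with respect to the order `r`, i.e. the
`r`-maximum of the gap set `ℕ^d \ S`. -/
def IsFrobGapWrt {d : ℕ} (S : Set (Fin d → ℕ))
    (r : (Fin d → ℕ) → (Fin d → ℕ) → Prop) (F : Fin d → ℕ) : Prop :=
  F ∉ S ∧ ∀ x, x ∉ S → x ≠ F → r x F

/-- `F` is a Frobenius allowable gap of `S`: it is the Frobenius gap with respect to
some relaxed monomial order. -/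
def FrobAllowable {d : ℕ} (S : Set (Fin d → ℕ)) (F : Fin d → ℕ) : Prop :=
  ∃ r, IsRMO r ∧ IsFrobGapWrt S r F

/-- `F` is a maximal gap of `S` with respect to the natural (componentwise)
partial order on `ℕ^d`. -/
def MaxGap {d : ℕ} (S : Set (Fin d → ℕ)) (F : Fin d → ℕ) : Prop :=
  F ∉ S ∧ ∀ x, x ∉ S → F ≤ x → x = F

/-- The set of Frobenius allowable gaps of `S`, i.e. the maximal elements of the gap
set under the natural partial order. -/
def FA {d : ℕ} (S : Set (Fin d → ℕ)) : Set (Fin d → ℕ) := {F | MaxGap S F}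

/-- The set of pseudo-Frobenius gaps of `S`. -/
def PF {d : ℕ} (S : Set (Fin d → ℕ)) : Set (Fin d → ℕ) :=
  {P | P ∉ S ∧ ∀ s ∈ S, s ≠ 0 → P + s ∈ S}

/-- `S` is quasi-irreducible: for every gap `x`, either `2x` is Frobenius allowable or
`F - x ∈ S` for some Frobenius allowable gap `F`. -/
def QuasiIrreducible {d : ℕ} (S : Set (Fin d → ℕ)) : Prop :=
  ∀ x, x ∉ S → (x + x ∈ FA S ∨ ∃ F ∈ FA S, ∃ s ∈ S, x + s = F)

/-- `S` is a Frobenius GNS with Frobenius gap `F`: the gap set has `F` as its unique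
maximal element under the natural partial order. -/
def IsFrobeniusGNS {d : ℕ} (S : Set (Fin d → ℕ)) (F : Fin d → ℕ) : Prop :=
  IsGNS S ∧ MaxGap S F ∧ ∀ x, MaxGap S x → x = F

/-- `‖F‖ = ∏ i (F^(i) + 1)`, the number of lattice points in the box `[0, F]`. -/
def normF {d : ℕ} (F : Fin d → ℕ) : ℕ := ∏ i, (F i + 1)

/-- `N(F)`: the number of Frobenius GNS in `ℕ^d` with Frobenius gap `F`. -/
noncomputable def NF {d : ℕ} (F : Fin d → ℕ) : ℕ :=
  {S : Set (Fin d → ℕ) | IsFrobeniusGNS S F}.ncard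

theorem Set.ncard_add_ncard_le_of_inter_subset_singleton {α : Type*} {s t u : Set α} {a : α}
    (hs : s ⊆ u) (ht : t ⊆ u) (hst : s ∩ t ⊆ {a}) (hu : u.Finite) :
    s.ncard + t.ncard ≤ u.ncard + 1 := by
  rw [← Set.ncard_union_add_ncard_inter s t (hu.subset hs) (hu.subset ht)]
  exact add_le_add (Set.ncard_le_ncard (Set.union_subset hs ht) hu)
    ((Set.ncard_le_ncard hst).trans (Set.ncard_singleton a).le)

theorem ncard_Iic_eq_normF {d : ℕ} (F : Fin d → ℕ) : (Set.Iic F).ncard = normF F := by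
  rw [← Finset.coe_Iic, Set.ncard_coe_finset, Pi.card_Iic, normF]
  simp only [Nat.card_Iic]

section GNS

variable {d : ℕ} {S : Set (Fin d → ℕ)} {F x : Fin d → ℕ}

theorem exists_maxGap_ge (hfin : Sᶜ.Finite) (hx : x ∉ S) : ∃ y, MaxGap S y ∧ x ≤ y := by
  obtain ⟨y, hxy, hy⟩ := hfin.exists_le_maximal hx
  exact ⟨y, ⟨hy.prop, fun z hz hyz => le_antisymm (hy.le_of_ge hz hyz) hyz⟩, hxy⟩

theorem IsFrobeniusGNS.compl_subset_Iic (h : IsFrobeniusGNS S F) : Sᶜ ⊆ Set.Iic F := by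
  intro x hx
  obtain ⟨y, hy, hxy⟩ := exists_maxGap_ge h.1.2.2 hx
  exact h.2.2 y hy ▸ hxy

theorem ncard_inter_Iic_add_ncard_compl (hS : Sᶜ ⊆ Set.Iic F) :
    (Set.Iic F ∩ S).ncard + Sᶜ.ncard = normF F := by
  rw [← ncard_Iic_eq_normF, ← Set.ncard_inter_add_ncard_sdiff_eq_ncard (Set.Iic F) S,
    Set.sdiff_eq_compl_inter, Set.inter_eq_left.mpr hS]

theorem sub_notMem_of_le_of_mem (hadd : ∀ a ∈ S, ∀ b ∈ S, a + b ∈ S) (hF : F ∉ S) (hx : x ∈ S)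
    (hxF : x ≤ F) : F - x ∉ S := fun hFx =>
  hF (tsub_add_cancel_of_le hxF ▸ hadd _ hFx _ hx)

theorem eq_zero_of_sub_mem_PF (hF : F ∉ S) (hx : x ∈ S) (hxF : x ≤ F) (hP : F - x ∈ PF S) :
    x = 0 := by
  by_contra hx0
  exact hF (tsub_add_cancel_of_le hxF ▸ hP.2 x hx hx0)

end GNS

/-- For a Frobenius GNS `S` with Frobenius gap `F`, `t(S) ≤ 2g(S) + 1 - ‖F‖`. -/
theorem type_le_two_genus {d : ℕ} (S : Set (Fin d → ℕ)) (F : Fin d → ℕ)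
    (h : IsFrobeniusGNS S F) :
    ((PF S).ncard : ℤ) ≤ 2 * (Sᶜ.ncard : ℤ) + 1 - (normF F : ℤ) := by
  have hbox := ncard_inter_Iic_add_ncard_compl h.compl_subset_Iic
  obtain ⟨⟨-, hadd, hfin⟩, ⟨hF, -⟩, -⟩ := h
  have hreflect : (F - ·) '' (Set.Iic F ∩ S) ⊆ Sᶜ := by
    rintro _ ⟨x, ⟨hxF, hx⟩, rfl⟩
    exact sub_notMem_of_le_of_mem hadd hF hx hxF
  have hinter : PF S ∩ (F - ·) '' (Set.Iic F ∩ S) ⊆ {F} := by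
    rintro _ ⟨hP, x, ⟨hxF, hx⟩, rfl⟩
    simp [eq_zero_of_sub_mem_PF hF hx hxF hP]
  have hinj : Set.InjOn (F - ·) (Set.Iic F ∩ S) := fun _ hx _ hy =>
    tsub_inj_right hx.1 hy.1
  have hcount := Set.ncard_add_ncard_le_of_inter_subset_singleton (fun _ hP => hP.1) hreflect
    hinter hfin
  rw [hinj.ncard_image] at hcount
  omega
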